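/- Let P, Q, R, S be four distinct collinear points (with P ≠ Q and R ≠ S) in the affine plane over a field, and C a point on the same line satisfying (C−Q)/(C−R) = (Q−S)/(R−P). Then (C−Q)/(C−P) = ((R−Q)/(R−P))·((S−Q)/(S−P)). -/
import Mathlib


open Classical in
noncomputable def ratio {k : Type*} [Field k] (X Y Z W : k × k) : k :=
  if h : ∃ r : k, X - Y = r • (Z - W) then h.choose else 0

lemma ratio_eq {k : Type*} [Field k] (X Y Z W : k × k) (r : k)
    (hZW : Z ≠ W) (h : X - Y = r • (Z - W)) : ratio X Y Z W = r := by
  have hex : ∃ r : k, X - Y = r • (Z - W) := ⟨r, h⟩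
  rw [ratio, dif_pos hex]
  have h2 := hex.choose_spec
  have hv : Z - W ≠ 0 := sub_ne_zero.mpr hZW
  exact smul_left_injective k hv (h2.symm.trans h)

theorem stmt1 {k : Type*} [Field k] (P Q R S C : k × k)
    (hcol : Collinear k ({P, Q, R, S, C} : Set (k × k)))
    (hPQ : P ≠ Q) (hRS : R ≠ S) (hRP : R ≠ P) (hRQ : R ≠ Q) (hSP : S ≠ P) (hSQ : S ≠ Q)
    (hCP : C ≠ P) (hCQ : C ≠ Q) (hCR : C ≠ R) (hCS : C ≠ S)
    (h : ratio C Q C R = ratio Q S R P) :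
    ratio C Q C P = ratio R Q R P * ratio S Q S P := by
  obtain ⟨v, hv⟩ := (collinear_iff_of_mem (by simp : P ∈ ({P, Q, R, S, C} : Set (k × k)))).mp hcol
  obtain ⟨q, hq⟩ := hv Q (by simp)
  obtain ⟨r, hr⟩ := hv R (by simp)
  obtain ⟨s, hs⟩ := hv S (by simp)
  obtain ⟨c, hc⟩ := hv C (by simp)
  have hp : P = (0 : k) • v +ᵥ P := by simp
  have key : ∀ (X Y : k × k) (x y : k), X = x • v +ᵥ P → Y = y • v +ᵥ P →
      X - Y = (x - y) • v := by
    intro X Y x y hX hY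
    rw [hX, hY, vadd_eq_add, vadd_eq_add, sub_smul]
    abel
  have hne : ∀ (X Y : k × k) (x y : k), X = x • v +ᵥ P → Y = y • v +ᵥ P →
      X ≠ Y → x ≠ y := by
    intro X Y x y hX hY hXY heq
    exact hXY (by rw [hX, hY, heq])
  have hcr := hne C R c r hc hr hCR
  have hcp := hne C P c 0 hc hp hCP
  have hcq := hne C Q c q hc hq hCQ
  have hr0 := hne R P r 0 hr hp hRP
  have hs0 := hne S P s 0 hs hp hSP
  have hq0 := hne Q P q 0 hq hp hPQ.symm
  have hrq := hne R Q r q hr hq hRQ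
  have hsq := hne S Q s q hs hq hSQ
  have hqs := hne Q S q s hq hs hSQ.symm.symm.symm
  have e1 : ratio C Q C R = (c - q) / (c - r) := by
    apply ratio_eq _ _ _ _ _ hCR
    rw [key C Q c q hc hq, key C R c r hc hr, smul_smul,
      div_mul_cancel₀ _ (sub_ne_zero.mpr hcr)]
  have e2 : ratio Q S R P = (q - s) / (r - 0) := by
    apply ratio_eq _ _ _ _ _ hRP
    rw [key Q S q s hq hs, key R P r 0 hr hp, smul_smul,
      div_mul_cancel₀ _ (sub_ne_zero.mpr hr0)]
  have e3 : ratio C Q C P = (c - q) / (c - 0) := by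
    apply ratio_eq _ _ _ _ _ hCP
    rw [key C Q c q hc hq, key C P c 0 hc hp, smul_smul,
      div_mul_cancel₀ _ (sub_ne_zero.mpr hcp)]
  have e4 : ratio R Q R P = (r - q) / (r - 0) := by
    apply ratio_eq _ _ _ _ _ hRP
    rw [key R Q r q hr hq, key R P r 0 hr hp, smul_smul,
      div_mul_cancel₀ _ (sub_ne_zero.mpr hr0)]
  have e5 : ratio S Q S P = (s - q) / (s - 0) := by
    apply ratio_eq _ _ _ _ _ hSP
    rw [key S Q s q hs hq, key S P s 0 hs hp, smul_smul,
      div_mul_cancel₀ _ (sub_ne_zero.mpr hs0)]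
  rw [e1, e2] at h
  rw [e3, e4, e5]
  have hcr' : c - r ≠ 0 := sub_ne_zero.mpr hcr
  have hc0 : c - 0 ≠ 0 := sub_ne_zero.mpr hcp
  have hr0' : r - 0 ≠ 0 := sub_ne_zero.mpr hr0
  have hs0' : s - 0 ≠ 0 := sub_ne_zero.mpr hs0
  have h2 : (c - q) * (r - 0) = (q - s) * (c - r) := (div_eq_div_iff hcr' hr0').mp h
  rw [div_mul_div_comm, div_eq_div_iff hc0 (mul_ne_zero hr0' hs0')]
  linear_combination q * h2
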